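/- For x_{j₁} = 1 and x_{j₂} = 0 with j₁ ≠ j₂, the change from simultaneously flipping both satisfies Δz̃_{j₁,j₂}(x) = Δz̃_{j₁}^↓(x) + Δz̃_{j₂}^↑(x) − Σ_{i ∈ S̄(x)∩(M_L∪M_E)} w̃_i⁺ − Σ_{i ∈ S̄(x)∩(M_G∪M_E)} w̃_i⁻, where S̄(x) = {i ∈ S_{j₁} ∩ S_{j₂} : s_i(x) = b_i}. -/

import Mathlib

open scoped Classical BigOperators

noncomputable def sLHS {M N : Type*} [Fintype N] (a : M → N → ℝ) (x : N → ℝ) (i : M) : ℝ :=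
  ∑ j, a i j * x j

noncomputable def penObj {M N : Type*} [Fintype M] [Fintype N]
    (ML MG ME : Finset M) (a : M → N → ℝ) (b : M → ℕ) (c : N → ℝ)
    (wp wm : M → ℝ) (x : N → ℝ) : ℝ :=
  (∑ j, c j * x j)
    + ∑ i ∈ ML ∪ ME, wp i * max (sLHS a x i - (b i : ℝ)) 0
    + ∑ i ∈ MG ∪ ME, wm i * max ((b i : ℝ) - sLHS a x i) 0

noncomputable def flipVar {N : Type*} [DecidableEq N] (x : N → ℝ) (j : N) : N → ℝ :=
  Function.update x j (1 - x j)

noncomputable def Sset {M N : Type*} [Fintype M] (a : M → N → ℝ) (j : N) : Finset M :=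
  Finset.univ.filter (fun i => a i j = 1)

/-!
The cost term and every row activity `s_i` are linear in `x`, so flipping `j₁` down and `j₂` up
shifts `s_i` by `-a i j₁` and `+a i j₂` independently. The only non-additivity comes from the
hinge terms: for an integer `t` and `e₁ e₂ ∈ {0, 1}`,
`(t - e₁ + e₂)⁺ + t⁺ = (t - e₁)⁺ + (t + e₂)⁺`, except when `e₁ = e₂ = 1` and `t = 0`, where the
right side is larger by one. Those exceptional rows are exactly `S̄(x)`; the same identity for
`t = b_i - s_i`, with the roles of `j₁` and `j₂` swapped, handles the `≥` penalties.
-/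

theorem sum_mul_flipVar {N : Type*} [Fintype N] [DecidableEq N] (c x : N → ℝ) (j : N) :
    ∑ k, c k * flipVar x j k = ∑ k, c k * x k + c j * (1 - 2 * x j) := by
  have h : (fun k => c k * flipVar x j k)
      = Function.update (fun k => c k * x k) j (c j * (1 - x j)) := by
    funext k
    rcases eq_or_ne k j with rfl | hk
    · simp [flipVar]
    · simp [flipVar, Function.update_of_ne hk]
  rw [h, Finset.sum_update_of_mem (Finset.mem_univ j),
    Finset.sum_eq_add_sum_sdiff_singleton_of_mem (Finset.mem_univ j) (fun k => c k * x k)]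
  ring

theorem exists_intCast_of_zero_or_one {e : ℝ} (h : e = 0 ∨ e = 1) :
    ∃ k : ℤ, e = k ∧ (k = 0 ∨ k = 1) := by
  rcases h with rfl | rfl
  exacts [⟨0, by simp⟩, ⟨1, by simp⟩]

theorem max_sub_add_zero_add_max_zero (m : ℤ) {e₁ e₂ : ℝ} (h₁ : e₁ = 0 ∨ e₁ = 1)
    (h₂ : e₂ = 0 ∨ e₂ = 1) :
    max ((m : ℝ) - e₁ + e₂) 0 + max (m : ℝ) 0 + (if e₁ = 1 ∧ e₂ = 1 ∧ (m : ℝ) = 0 then 1 else 0)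
      = max ((m : ℝ) - e₁) 0 + max ((m : ℝ) + e₂) 0 := by
  obtain ⟨k₁, rfl, hk₁⟩ := exists_intCast_of_zero_or_one h₁
  obtain ⟨k₂, rfl, hk₂⟩ := exists_intCast_of_zero_or_one h₂
  have : max (m - k₁ + k₂) 0 + max m 0 + (if k₁ = 1 ∧ k₂ = 1 ∧ m = 0 then 1 else 0)
      = max (m - k₁) 0 + max (m + k₂) 0 := by
    split_ifs <;> omega
  exact_mod_cast this

theorem sLHS_flipVar {M N : Type*} [Fintype N] [DecidableEq N] (a : M → N → ℝ) (x : N → ℝ)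
    (j : N) (i : M) : sLHS a (flipVar x j) i = sLHS a x i + a i j * (1 - 2 * x j) :=
  sum_mul_flipVar (a i) x j

theorem flipVar_of_ne {N : Type*} [DecidableEq N] (x : N → ℝ) {j k : N} (h : k ≠ j) :
    flipVar x j k = x k :=
  Function.update_of_ne h _ _

theorem exists_sLHS_eq_intCast {M N : Type*} [Fintype N] {a : M → N → ℝ} {x : N → ℝ}
    (ha : ∀ i j, a i j = 0 ∨ a i j = 1) (hx : ∀ j, x j = 0 ∨ x j = 1) (i : M) :
    ∃ m : ℤ, sLHS a x i = m := by
  choose k hk _ using fun j => exists_intCast_of_zero_or_one (ha i j)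
  choose l hl _ using fun j => exists_intCast_of_zero_or_one (hx j)
  exact ⟨∑ j, k j * l j, by simp [sLHS, hk, hl]⟩

theorem sum_mul_max_zero_of_shift {M : Type*} (S T : Finset M) (w t t₁ t₂ t₁₂ e₁ e₂ : M → ℝ)
    (ht : ∀ i, ∃ m : ℤ, t i = m) (he₁ : ∀ i, e₁ i = 0 ∨ e₁ i = 1)
    (he₂ : ∀ i, e₂ i = 0 ∨ e₂ i = 1) (ht₁ : ∀ i, t₁ i = t i - e₁ i)
    (ht₂ : ∀ i, t₂ i = t i + e₂ i) (ht₁₂ : ∀ i, t₁₂ i = t i - e₁ i + e₂ i)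
    (hS : ∀ i, i ∈ S ↔ e₁ i = 1 ∧ e₂ i = 1 ∧ t i = 0) :
    ∑ i ∈ T, w i * max (t₁₂ i) 0
      = ∑ i ∈ T, w i * max (t₁ i) 0 + ∑ i ∈ T, w i * max (t₂ i) 0
        - ∑ i ∈ T, w i * max (t i) 0 - ∑ i ∈ S ∩ T, w i := by
  rw [Finset.inter_comm, ← Finset.filter_mem_eq_inter, Finset.sum_filter,
    ← Finset.sum_add_distrib, ← Finset.sum_sub_distrib, ← Finset.sum_sub_distrib]
  refine Finset.sum_congr rfl fun i _ => ?_
  obtain ⟨m, hm⟩ := ht i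
  have key := max_sub_add_zero_add_max_zero m (he₁ i) (he₂ i)
  simp only [ht₁, ht₂, ht₁₂, hS, hm]
  split_ifs at key ⊢ <;> linear_combination w i * key

theorem stmt_8_general {M N : Type*} [Fintype M] [Fintype N] [DecidableEq N]
    (ML MG ME : Finset M) (a : M → N → ℝ) (b : M → ℕ) (c : N → ℝ)
    (wp wm : M → ℝ)
    (ha : ∀ i j, a i j = 0 ∨ a i j = 1)
    (x : N → ℝ) (hx : ∀ j', x j' = 0 ∨ x j' = 1)
    (j₁ j₂ : N) (hne : j₁ ≠ j₂) (h1 : x j₁ = 1) (h2 : x j₂ = 0) :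
    penObj ML MG ME a b c wp wm (flipVar (flipVar x j₁) j₂) - penObj ML MG ME a b c wp wm x
      = (penObj ML MG ME a b c wp wm (flipVar x j₁) - penObj ML MG ME a b c wp wm x)
        + (penObj ML MG ME a b c wp wm (flipVar x j₂) - penObj ML MG ME a b c wp wm x)
        - ∑ i ∈ ((Sset a j₁ ∩ Sset a j₂).filter (fun i => sLHS a x i = (b i : ℝ)))
            ∩ (ML ∪ ME), wp i
        - ∑ i ∈ ((Sset a j₁ ∩ Sset a j₂).filter (fun i => sLHS a x i = (b i : ℝ)))
            ∩ (MG ∪ ME), wm i := by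
  set Sbar := (Sset a j₁ ∩ Sset a j₂).filter (fun i => sLHS a x i = (b i : ℝ))
  set x₁ := flipVar x j₁
  set x₂ := flipVar x j₂
  have hx₁ : x₁ j₂ = 0 := (flipVar_of_ne x hne.symm).trans h2
  have hs₁ (i : M) : sLHS a x₁ i = sLHS a x i - a i j₁ := by rw [sLHS_flipVar, h1]; ring
  have hs₂ (i : M) : sLHS a x₂ i = sLHS a x i + a i j₂ := by rw [sLHS_flipVar, h2]; ring
  have hs₁₂ (i : M) : sLHS a (flipVar x₁ j₂) i = sLHS a x i - a i j₁ + a i j₂ := by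
    rw [sLHS_flipVar, hs₁, hx₁]; ring
  have hcost : ∑ j, c j * flipVar x₁ j₂ j + ∑ j, c j * x j
      = ∑ j, c j * x₁ j + ∑ j, c j * x₂ j := by
    simp only [x₁, x₂, sum_mul_flipVar, hx₁, h1, h2]; ring
  have hint (i : M) : ∃ m : ℤ, sLHS a x i = m := exists_sLHS_eq_intCast ha hx i
  have hplus := sum_mul_max_zero_of_shift Sbar (ML ∪ ME) wp (fun i => sLHS a x i - b i)
    (fun i => sLHS a x₁ i - b i) (fun i => sLHS a x₂ i - b i)
    (fun i => sLHS a (flipVar x₁ j₂) i - b i) (fun i => a i j₁) (fun i => a i j₂)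
    (fun i => by obtain ⟨m, hm⟩ := hint i; exact ⟨m - b i, by push_cast; rw [hm]⟩)
    (fun i => ha i j₁) (fun i => ha i j₂) (fun i => by simp only [hs₁]; ring)
    (fun i => by simp only [hs₂]; ring) (fun i => by simp only [hs₁₂]; ring)
    (fun i => by simp [Sbar, Sset, sub_eq_zero, and_assoc])
  have hminus := sum_mul_max_zero_of_shift Sbar (MG ∪ ME) wm (fun i => b i - sLHS a x i)
    (fun i => b i - sLHS a x₂ i) (fun i => b i - sLHS a x₁ i)
    (fun i => b i - sLHS a (flipVar x₁ j₂) i) (fun i => a i j₂) (fun i => a i j₁)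
    (fun i => by obtain ⟨m, hm⟩ := hint i; exact ⟨b i - m, by push_cast; rw [hm]⟩)
    (fun i => ha i j₂) (fun i => ha i j₁) (fun i => by simp only [hs₂]; ring)
    (fun i => by simp only [hs₁]; ring) (fun i => by simp only [hs₁₂]; ring)
    (fun i => by simp [Sbar, Sset, sub_eq_zero, eq_comm]; tauto)
  unfold penObj
  linarith

theorem stmt_8 {M N : Type*} [Fintype M] [Fintype N] [DecidableEq N]
    (ML MG ME : Finset M) (a : M → N → ℝ) (b : M → ℕ) (c : N → ℝ)
    (wp wm : M → ℝ)
    (ha : ∀ i j, a i j = 0 ∨ a i j = 1)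
    (hwp : ∀ i, 0 ≤ wp i) (hwm : ∀ i, 0 ≤ wm i)
    (x : N → ℝ) (hx : ∀ j', x j' = 0 ∨ x j' = 1)
    (j₁ j₂ : N) (hne : j₁ ≠ j₂) (h1 : x j₁ = 1) (h2 : x j₂ = 0) :
    penObj ML MG ME a b c wp wm (flipVar (flipVar x j₁) j₂) - penObj ML MG ME a b c wp wm x
      = (penObj ML MG ME a b c wp wm (flipVar x j₁) - penObj ML MG ME a b c wp wm x)
        + (penObj ML MG ME a b c wp wm (flipVar x j₂) - penObj ML MG ME a b c wp wm x)
        - ∑ i ∈ ((Sset a j₁ ∩ Sset a j₂).filter (fun i => sLHS a x i = (b i : ℝ)))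
            ∩ (ML ∪ ME), wp i
        - ∑ i ∈ ((Sset a j₁ ∩ Sset a j₂).filter (fun i => sLHS a x i = (b i : ℝ)))
            ∩ (MG ∪ ME), wm i :=
  stmt_8_general ML MG ME a b c wp wm ha x hx j₁ j₂ hne h1 h2
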